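/- Let m ≥ 1 and let A, B, C, C' be m×m matrices over F₂ such that the digital nets generated by (A, B, C) and by (A, B, C') are both (0,m,3)-nets over F₂. Let c_j and c'_j denote the j-th rows of C and C' respectively. Then for every 1 ≤ j ≤ m, the vector c'_j lies in the coset c_j + span{c_1,…,c_{j−1}} in F₂^m. -/
import Mathlib


open Matrix

/-- The vector of binary digits of `l` (least significant first). -/
def digitsVec (m l : ℕ) : Fin m → ZMod 2 := fun k => if l.testBit k.val then 1 else 0

/-- The map φ sending a bit vector to a real number in [0,1). -/
noncomputable def phiMap (m : ℕ) (y : Fin m → ZMod 2) : ℝ :=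
  ∑ k : Fin m, ((y k).val : ℝ) / 2 ^ (k.val + 1)

/-- The digital net (as a multiset of `2^m` points in `[0,1)^s`) generated by
matrices `C 0, …, C (s-1)`. -/
noncomputable def digitalNet (m s : ℕ) (C : Fin s → Matrix (Fin m) (Fin m) (ZMod 2)) :
    Multiset (Fin s → ℝ) :=
  (Multiset.range (2 ^ m)).map fun l => fun j => phiMap m ((C j).mulVec (digitsVec m l))

open Classical in
/-- `P` is a `(t,m,s)`-net over `F₂`: every elementary interval of volume `2^{t-m}`
contains exactly `2^t` points of `P`, counted with multiplicity. -/
def IsNet (t m s : ℕ) (P : Multiset (Fin s → ℝ)) : Prop :=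
  ∀ d : Fin s → ℕ, (∑ i, d i) = m - t →
    ∀ a : Fin s → ℕ, (∀ i, a i < 2 ^ d i) →
      (P.countP fun x => ∀ i,
        ((a i : ℝ) / 2 ^ d i ≤ x i ∧ x i < ((a i : ℝ) + 1) / 2 ^ d i)) = 2 ^ t

/-- The anti-diagonal matrix `J_m` over `F₂`. -/
def Jmat (m : ℕ) : Matrix (Fin m) (Fin m) (ZMod 2) :=
  Matrix.of fun i j => if i.val + j.val = m - 1 then 1 else 0

/-- The upper-triangular Pascal matrix `P_m` over `F₂` (0-indexed entry `(i,j)` is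
`binom(j,i) mod 2`). -/
def Pmat (m : ℕ) : Matrix (Fin m) (Fin m) (ZMod 2) :=
  Matrix.of fun i j => ((j.val.choose i.val : ℕ) : ZMod 2)

/-- A matrix is lower triangular. -/
def IsLowerTri {m : ℕ} (L : Matrix (Fin m) (Fin m) (ZMod 2)) : Prop :=
  ∀ i j : Fin m, i < j → L i j = 0

/-- The set consisting of the first `n` rows of `M`. -/
def rowSet {m : ℕ} (M : Matrix (Fin m) (Fin m) (ZMod 2)) (n : ℕ) :
    Set (Fin m → ZMod 2) :=
  {x | ∃ r : Fin m, r.val < n ∧ x = M r}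

/-- The subspace `V_{i,j}` spanned by the first `i` rows of `A`, the first
`m−i−j−1` rows of `B` and the first `j` rows of `C`. -/
def Vsub {m : ℕ} (A B C : Matrix (Fin m) (Fin m) (ZMod 2)) (i j : ℕ) :
    Submodule (ZMod 2) (Fin m → ZMod 2) :=
  Submodule.span (ZMod 2) (rowSet A i ∪ rowSet B (m - i - j - 1) ∪ rowSet C j)

set_option maxHeartbeats 1000000 in
lemma digitsVec_inj {m l1 l2 : ℕ} (h1 : l1 < 2 ^ m) (h2 : l2 < 2 ^ m)
    (h : digitsVec m l1 = digitsVec m l2) : l1 = l2 := by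
  apply Nat.eq_of_testBit_eq
  intro k
  by_cases hk : k < m
  · have := congrFun h ⟨k, hk⟩
    simp only [digitsVec] at this
    by_cases b1 : l1.testBit k <;> by_cases b2 : l2.testBit k <;>
      simp [b1, b2] at this ⊢
  · have e1 : l1 < 2 ^ k := lt_of_lt_of_le h1 (Nat.pow_le_pow_right (by norm_num) (by omega))
    have e2 : l2 < 2 ^ k := lt_of_lt_of_le h2 (Nat.pow_le_pow_right (by norm_num) (by omega))
    rw [Nat.testBit_eq_false_of_lt e1, Nat.testBit_eq_false_of_lt e2]

lemma digitsVec_surj {m : ℕ} (v : Fin m → ZMod 2) : ∃ l < 2 ^ m, digitsVec m l = v := by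
  classical
  have himg : (Finset.range (2 ^ m)).image (fun l => digitsVec m l) = Finset.univ := by
    apply Finset.eq_univ_of_card
    rw [Finset.card_image_of_injOn, Finset.card_range]
    · rw [show Fintype.card (Fin m → ZMod 2) = Fintype.card (ZMod 2) ^ Fintype.card (Fin m)
        from Fintype.card_fun]
      simp [ZMod.card]
    · intro a ha b hb hab
      exact digitsVec_inj (Finset.mem_range.mp ha) (Finset.mem_range.mp hb) hab
  have : v ∈ (Finset.range (2 ^ m)).image (fun l => digitsVec m l) := by
    rw [himg]; exact Finset.mem_univ v
  obtain ⟨l, hl, he⟩ := Finset.mem_image.mp this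
  exact ⟨l, Finset.mem_range.mp hl, he⟩

lemma phiMap_nonneg {m : ℕ} (y : Fin m → ZMod 2) : 0 ≤ phiMap m y := by
  apply Finset.sum_nonneg
  intro k _
  positivity

lemma geo_bound : ∀ (n d : ℕ), (∑ k ∈ Finset.range n, ((1:ℝ)/2) ^ (d + k + 1))
    ≤ (1/2) ^ d - (1/2) ^ (d + n) := by
  intro n
  induction n with
  | zero => intro d; simp
  | succ n ih =>
    intro d
    rw [Finset.sum_range_succ]
    have h2 : ((1:ℝ)/2) ^ (d + (n+1)) = (1/2) ^ (d + n) - (1/2)^(d + n + 1) := by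
      rw [show d + (n+1) = d + n + 1 by ring]
      rw [pow_succ]
      ring
    have := ih d
    rw [h2]
    linarith

lemma phiMap_lt {m : ℕ} (y : Fin m → ZMod 2) {d : ℕ} (hd : d ≤ m)
    (hy : ∀ k : Fin m, k.val < d → y k = 0) : phiMap m y < 1 / 2 ^ d := by
  have hterm : ∀ k : Fin m, ((y k).val : ℝ) / 2 ^ (k.val + 1)
      ≤ if k.val < d then 0 else ((1:ℝ)/2) ^ (k.val + 1) := by
    intro k
    by_cases hk : k.val < d
    · simp [hk, hy k hk]
    · simp only [hk, if_false, div_pow, one_pow]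
      have hv1 : ((y k).val : ℝ) ≤ 1 := by
        have := ZMod.val_lt (y k)
        exact_mod_cast Nat.lt_succ_iff.mp this
      gcongr
  have h1 : phiMap m y ≤ ∑ k : Fin m, (if k.val < d then 0 else ((1:ℝ)/2) ^ (k.val + 1)) :=
    Finset.sum_le_sum (fun k _ => hterm k)
  have h2 : (∑ k : Fin m, (if k.val < d then 0 else ((1:ℝ)/2) ^ (k.val + 1)))
      = ∑ k ∈ Finset.range m, (if k < d then 0 else ((1:ℝ)/2) ^ (k + 1)) :=
    Fin.sum_univ_eq_sum_range (fun k => if k < d then 0 else ((1:ℝ)/2) ^ (k + 1)) m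
  have h3 : (∑ k ∈ Finset.range m, (if k < d then 0 else ((1:ℝ)/2) ^ (k + 1)))
      = ∑ k ∈ Finset.Ico d m, ((1:ℝ)/2) ^ (k + 1) := by
    rw [Finset.range_eq_Ico, ← Finset.sum_Ico_consecutive _ (Nat.zero_le d) hd]
    have e1 : (∑ k ∈ Finset.Ico 0 d, (if k < d then (0:ℝ) else ((1:ℝ)/2) ^ (k + 1))) = 0 := by
      apply Finset.sum_eq_zero
      intro k hk
      simp [(Finset.mem_Ico.mp hk).2]
    have e2 : (∑ k ∈ Finset.Ico d m, (if k < d then (0:ℝ) else ((1:ℝ)/2) ^ (k + 1)))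
        = ∑ k ∈ Finset.Ico d m, ((1:ℝ)/2) ^ (k + 1) := by
      apply Finset.sum_congr rfl
      intro k hk
      simp [Nat.not_lt.mpr (Finset.mem_Ico.mp hk).1]
    rw [e1, e2, zero_add]
  have h4 : (∑ k ∈ Finset.Ico d m, ((1:ℝ)/2) ^ (k + 1))
      = ∑ j ∈ Finset.range (m - d), ((1:ℝ)/2) ^ (d + j + 1) :=
    Finset.sum_Ico_eq_sum_range (fun k => ((1:ℝ)/2) ^ (k+1)) d m
  have h5 := geo_bound (m - d) d
  have h6 : (0:ℝ) < (1/2) ^ (d + (m - d)) := by positivity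
  have h7 : ((1:ℝ)/2) ^ d = 1 / 2 ^ d := by rw [div_pow, one_pow]
  calc phiMap m y ≤ _ := h1
    _ < 1 / 2 ^ d := by rw [h2, h3, h4, ← h7]; linarith

lemma phiMap_ge {m : ℕ} (y : Fin m → ZMod 2) {k : Fin m} (hk : y k ≠ 0) :
    (1:ℝ) / 2 ^ (k.val + 1) ≤ phiMap m y := by
  have hval : ((y k).val : ℝ) = 1 := by
    have h2 := ZMod.val_lt (y k)
    have h0 : (y k).val ≠ 0 := fun hh => hk ((ZMod.val_eq_zero _).mp hh)
    have : (y k).val = 1 := by omega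
    exact_mod_cast this
  calc (1:ℝ) / 2 ^ (k.val + 1) = ((y k).val : ℝ) / 2 ^ (k.val + 1) := by rw [hval]
    _ ≤ phiMap m y := Finset.single_le_sum (f := fun j : Fin m => ((y j).val : ℝ) / 2 ^ (j.val + 1))
        (fun j _ => by positivity) (Finset.mem_univ k)

lemma box_iff {m : ℕ} (y : Fin m → ZMod 2) {d : ℕ} (hd : d ≤ m) :
    ((((0:ℕ)):ℝ) / 2 ^ d ≤ phiMap m y ∧ phiMap m y < (((0:ℕ):ℝ) + 1) / 2 ^ d) ↔
      ∀ k : Fin m, k.val < d → y k = 0 := by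
  simp only [Nat.cast_zero, zero_div, zero_add]
  constructor
  · rintro ⟨-, hlt⟩ k hkd
    by_contra hne
    have h1 := phiMap_ge y hne
    have h2 : (1:ℝ) / 2 ^ d ≤ 1 / 2 ^ (k.val + 1) := by
      gcongr
      · norm_num
      · omega
    linarith
  · intro hy
    exact ⟨phiMap_nonneg y, phiMap_lt y hd hy⟩

lemma net_kernel {m : ℕ} (D : Fin 3 → Matrix (Fin m) (Fin m) (ZMod 2))
    (h : IsNet 0 m 3 (digitalNet m 3 D)) (d : Fin 3 → ℕ) (hd : ∑ i, d i = m)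
    (v : Fin m → ZMod 2)
    (hv : ∀ j : Fin 3, ∀ k : Fin m, k.val < d j → (D j).mulVec v k = 0) : v = 0 := by
  classical
  by_contra hne
  have hdle : ∀ j : Fin 3, d j ≤ m := by
    intro j
    have := Finset.single_le_sum (f := d) (fun i _ => Nat.zero_le _) (Finset.mem_univ j)
    omega
  have hcount := h d (by simpa using hd) 0 (fun i => by positivity)
  set p : (Fin 3 → ℝ) → Prop := fun x => ∀ i,
      (((0:Fin 3 → ℕ) i : ℝ) / 2 ^ d i ≤ x i ∧ x i < (((0:Fin 3 → ℕ) i : ℝ) + 1) / 2 ^ d i) with hp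
  have hpoint : ∀ l : ℕ, p (fun j => phiMap m ((D j).mulVec (digitsVec m l))) ↔
      ∀ j : Fin 3, ∀ k : Fin m, k.val < d j → (D j).mulVec (digitsVec m l) k = 0 := by
    intro l
    constructor
    · intro hl j
      exact (box_iff _ (hdle j)).mp (hl j)
    · intro hl j
      exact (box_iff _ (hdle j)).mpr (hl j)
  obtain ⟨l0, hl0, he0⟩ := digitsVec_surj (0 : Fin m → ZMod 2)
  obtain ⟨l1, hl1, he1⟩ := digitsVec_surj v
  have hne01 : l0 ≠ l1 := by
    intro hh
    apply hne
    rw [← he1, ← hh, he0]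
  -- rewrite the count
  rw [digitalNet, Multiset.countP_map] at hcount
  have hfilter : Multiset.filter
      (fun l => p (fun j => phiMap m ((D j).mulVec (digitsVec m l)))) (Multiset.range (2 ^ m))
      = ((Finset.range (2 ^ m)).filter
          (fun l => p (fun j => phiMap m ((D j).mulVec (digitsVec m l))))).val := by
    rw [Finset.filter_val, Finset.range_val]
  have hcard : Multiset.card (Multiset.filter
      (fun l => p (fun j => phiMap m ((D j).mulVec (digitsVec m l)))) (Multiset.range (2 ^ m)))
      = ((Finset.range (2 ^ m)).filter
          (fun l => p (fun j => phiMap m ((D j).mulVec (digitsVec m l))))).card := by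
    rw [hfilter]; rfl
  have hmem0 : l0 ∈ (Finset.range (2 ^ m)).filter
      (fun l => p (fun j => phiMap m ((D j).mulVec (digitsVec m l)))) := by
    rw [Finset.mem_filter]
    refine ⟨Finset.mem_range.mpr hl0, (hpoint l0).mpr ?_⟩
    intro j k _
    rw [he0, Matrix.mulVec_zero]
    rfl
  have hmem1 : l1 ∈ (Finset.range (2 ^ m)).filter
      (fun l => p (fun j => phiMap m ((D j).mulVec (digitsVec m l)))) := by
    rw [Finset.mem_filter]
    refine ⟨Finset.mem_range.mpr hl1, (hpoint l1).mpr ?_⟩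
    rw [he1]
    exact hv
  have h2le : 2 ≤ ((Finset.range (2 ^ m)).filter
      (fun l => p (fun j => phiMap m ((D j).mulVec (digitsVec m l))))).card := by
    have hsub : ({l0, l1} : Finset ℕ) ⊆ (Finset.range (2 ^ m)).filter
        (fun l => p (fun j => phiMap m ((D j).mulVec (digitsVec m l)))) := by
      intro x hx
      rcases Finset.mem_insert.mp hx with rfl | hx
      · exact hmem0
      · rw [Finset.mem_singleton.mp hx]; exact hmem1
    have := Finset.card_le_card hsub
    rwa [Finset.card_pair hne01] at this
  have hfin : ((Finset.range (2 ^ m)).filter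
      (fun l => p (fun j => phiMap m ((D j).mulVec (digitsVec m l))))).card = 2 ^ 0 :=
    hcard.symm.trans hcount
  rw [hfin] at h2le
  norm_num at h2le

def stack3 {m : ℕ} (A B C : Matrix (Fin m) (Fin m) (ZMod 2)) (d1 d2 : ℕ)
    (i : Fin m) : Fin m → ZMod 2 :=
  if h1 : i.val < d1 then A ⟨i.val, i.isLt⟩
  else if h2 : i.val < d1 + d2 then B ⟨i.val - d1, by omega⟩
  else C ⟨i.val - d1 - d2, by omega⟩

lemma stack3_indep {m : ℕ} (A B C : Matrix (Fin m) (Fin m) (ZMod 2))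
    (h : IsNet 0 m 3 (digitalNet m 3 ![A, B, C])) (d1 d2 d3 : ℕ) (hd : d1 + d2 + d3 = m) :
    LinearIndependent (ZMod 2) (stack3 A B C d1 d2) ∧
      Submodule.span (ZMod 2) (Set.range (stack3 A B C d1 d2)) = ⊤ := by
  classical
  set M : Matrix (Fin m) (Fin m) (ZMod 2) := Matrix.of (stack3 A B C d1 d2) with hM
  have hker : ∀ v, M.mulVec v = 0 → v = 0 := by
    intro v hv
    apply net_kernel ![A, B, C] h ![d1, d2, d3] (by simp [Fin.sum_univ_three]; omega) v
    intro j k hk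
    have hrow : ∀ i : Fin m, M i ⬝ᵥ v = 0 := fun i => congrFun hv i
    fin_cases j
    · simp only [Matrix.cons_val_zero] at hk ⊢
      have hb : k.val < d1 := hk
      have := hrow ⟨k.val, k.isLt⟩
      show A k ⬝ᵥ v = 0
      rw [show A k = M ⟨k.val, k.isLt⟩ by
        show A k = stack3 A B C d1 d2 ⟨k.val, k.isLt⟩
        simp only [stack3]
        rw [dif_pos hb]]
      exact this
    · simp only [Matrix.cons_val_one, Matrix.head_cons] at hk ⊢
      have hb : k.val < d2 := hk
      have hlt : d1 + k.val < m := by omega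
      have := hrow ⟨d1 + k.val, hlt⟩
      show B k ⬝ᵥ v = 0
      rw [show B k = M ⟨d1 + k.val, hlt⟩ by
        show B k = stack3 A B C d1 d2 ⟨d1 + k.val, hlt⟩
        simp only [stack3]
        rw [dif_neg (by simp), dif_pos (by simp [hb])]
        exact congrArg B (by ext; simp)]
      exact this
    · simp only [Matrix.cons_val_two, Matrix.tail_cons, Matrix.head_cons] at hk ⊢
      have hb : k.val < d3 := hk
      have hlt : d1 + d2 + k.val < m := by omega
      have := hrow ⟨d1 + d2 + k.val, hlt⟩
      show C k ⬝ᵥ v = 0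
      rw [show C k = M ⟨d1 + d2 + k.val, hlt⟩ by
        show C k = stack3 A B C d1 d2 ⟨d1 + d2 + k.val, hlt⟩
        simp only [stack3]
        rw [dif_neg (by simp <;> omega), dif_neg (by simp)]
        exact congrArg C (by ext; simp <;> omega)]
      exact this
  have hinj : Function.Injective M.mulVec := by
    rw [← Matrix.coe_mulVecLin]
    rw [← LinearMap.ker_eq_bot, LinearMap.ker_eq_bot']
    intro v hv
    exact hker v hv
  have hunit : IsUnit M := Matrix.mulVec_injective_iff_isUnit.mp hinj
  constructor
  · exact Matrix.linearIndependent_rows_iff_isUnit.mpr hunit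
  · have hsurj : Function.Surjective M.vecMul := Matrix.vecMul_surjective_iff_isUnit.mpr hunit
    have : LinearMap.range M.vecMulLinear = ⊤ := by
      rw [LinearMap.range_eq_top]
      exact hsurj
    rw [range_vecMulLinear] at this
    exact this

lemma rowSet_mono {m : ℕ} (M : Matrix (Fin m) (Fin m) (ZMod 2)) {n n' : ℕ} (h : n ≤ n') :
    rowSet M n ⊆ rowSet M n' := by
  rintro x ⟨r, hr, rfl⟩
  exact ⟨r, by omega, rfl⟩

lemma rowSet_zero {m : ℕ} (M : Matrix (Fin m) (Fin m) (ZMod 2)) : rowSet M 0 = ∅ := by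
  ext x
  simp [rowSet]

lemma rowSet_succ {m : ℕ} (M : Matrix (Fin m) (Fin m) (ZMod 2)) {n : ℕ} (hn : n < m) :
    rowSet M (n + 1) = rowSet M n ∪ {M ⟨n, hn⟩} := by
  ext x
  constructor
  · rintro ⟨r, hr, rfl⟩
    by_cases hrn : r.val < n
    · exact Or.inl ⟨r, hrn, rfl⟩
    · right
      have : r = ⟨n, hn⟩ := by ext; simp <;> omega
      rw [this]
      rfl
  · rintro (⟨r, hr, rfl⟩ | hx)
    · exact ⟨r, by omega, rfl⟩
    · exact ⟨⟨n, hn⟩, by simp <;> omega, hx⟩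

lemma rowSet_stable {m : ℕ} (M : Matrix (Fin m) (Fin m) (ZMod 2)) {n : ℕ} (hn : m ≤ n) :
    rowSet M n = rowSet M m := by
  ext x
  constructor
  · rintro ⟨r, hr, rfl⟩
    exact ⟨r, r.isLt, rfl⟩
  · rintro ⟨r, hr, rfl⟩
    exact ⟨r, by omega, rfl⟩

lemma rowSet_as_image {m : ℕ} (A B C : Matrix (Fin m) (Fin m) (ZMod 2))
    {d1 d2 d3 n1 n2 n3 : ℕ} (hd : d1 + d2 + d3 = m)
    (h1 : n1 ≤ d1) (h2 : n2 ≤ d2) (h3 : n3 ≤ d3) :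
    rowSet A n1 ∪ rowSet B n2 ∪ rowSet C n3 =
      stack3 A B C d1 d2 '' {i : Fin m | i.val < n1 ∨ (d1 ≤ i.val ∧ i.val < d1 + n2) ∨
        (d1 + d2 ≤ i.val ∧ i.val < d1 + d2 + n3)} := by
  ext x
  constructor
  · rintro ((⟨r, hr, rfl⟩ | ⟨r, hr, rfl⟩) | ⟨r, hr, rfl⟩)
    · refine ⟨⟨r.val, r.isLt⟩, Or.inl hr, ?_⟩
      simp only [stack3]
      rw [dif_pos (by omega)]
    · refine ⟨⟨d1 + r.val, by omega⟩, Or.inr (Or.inl ⟨by simp, by simp <;> omega⟩), ?_⟩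
      simp only [stack3]
      rw [dif_neg (by simp), dif_pos (by simp <;> omega)]
      exact congrArg B (by ext; simp)
    · refine ⟨⟨d1 + d2 + r.val, by omega⟩,
        Or.inr (Or.inr ⟨by simp <;> omega, by simp <;> omega⟩), ?_⟩
      simp only [stack3]
      rw [dif_neg (by simp <;> omega), dif_neg (by simp)]
      exact congrArg C (by ext; simp <;> omega)
  · rintro ⟨i, hi, rfl⟩
    simp only [Set.mem_setOf_eq] at hi
    rcases hi with hi | ⟨hi1, hi2⟩ | ⟨hi1, hi2⟩
    · left; left
      refine ⟨⟨i.val, i.isLt⟩, hi, ?_⟩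
      simp only [stack3]
      rw [dif_pos (by omega)]
    · left; right
      refine ⟨⟨i.val - d1, by omega⟩, by simp <;> omega, ?_⟩
      simp only [stack3]
      rw [dif_neg (by omega), dif_pos (by omega)]
    · right
      refine ⟨⟨i.val - d1 - d2, by omega⟩, by simp <;> omega, ?_⟩
      simp only [stack3]
      rw [dif_neg (by omega), dif_neg (by omega)]

lemma zmod2_add_self {m : ℕ} (v : Fin m → ZMod 2) : v + v = 0 := by
  funext k
  have : ∀ a : ZMod 2, a + a = 0 := by decide
  exact this (v k)

lemma sup_span_add {m : ℕ} (W : Submodule (ZMod 2) (Fin m → ZMod 2)) (x u : Fin m → ZMod 2)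
    (hu : u ∈ W) :
    W ⊔ Submodule.span (ZMod 2) {x + u} = W ⊔ Submodule.span (ZMod 2) {x} := by
  apply le_antisymm
  · apply sup_le le_sup_left
    rw [Submodule.span_singleton_le_iff_mem]
    exact add_mem (Submodule.mem_sup_right (Submodule.mem_span_singleton_self x))
      (Submodule.mem_sup_left hu)
  · apply sup_le le_sup_left
    rw [Submodule.span_singleton_le_iff_mem]
    have hx : x = (x + u) + u := by rw [add_assoc, zmod2_add_self, add_zero]
    have hmem : (x + u) + u ∈ W ⊔ Submodule.span (ZMod 2) {x + u} :=
      add_mem (Submodule.mem_sup_right (Submodule.mem_span_singleton_self _))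
        (Submodule.mem_sup_left hu)
    rwa [← hx] at hmem

lemma span_rowSet_eq {m : ℕ} (C C' : Matrix (Fin m) (Fin m) (ZMod 2)) (n : ℕ)
    (hs : ∀ s : Fin m, s.val < n → C' s + C s ∈ Submodule.span (ZMod 2) (rowSet C s.val)) :
    Submodule.span (ZMod 2) (rowSet C' n) = Submodule.span (ZMod 2) (rowSet C n) := by
  induction n with
  | zero => rw [rowSet_zero, rowSet_zero]
  | succ n ih =>
    by_cases hn : n < m
    · have ih' := ih (fun s hsn => hs s (by omega))
      rw [rowSet_succ C' hn, rowSet_succ C hn, Submodule.span_union, Submodule.span_union, ih']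
      have hu : C' ⟨n, hn⟩ + C ⟨n, hn⟩ ∈ Submodule.span (ZMod 2) (rowSet C n) :=
        hs ⟨n, hn⟩ (by simp)
      have hrw : C' ⟨n, hn⟩ = C ⟨n, hn⟩ + (C' ⟨n, hn⟩ + C ⟨n, hn⟩) := by
        rw [add_comm (C' _) (C _), ← add_assoc, zmod2_add_self, zero_add]
      rw [hrw]
      exact sup_span_add _ _ _ hu
    · have h1 : rowSet C' (n + 1) = rowSet C' n := by
        rw [rowSet_stable C' (show m ≤ n + 1 by omega)]
        exact (rowSet_stable C' (by omega)).symm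
      have h2 : rowSet C (n + 1) = rowSet C n := by
        rw [rowSet_stable C (show m ≤ n + 1 by omega)]
        exact (rowSet_stable C (by omega)).symm
      rw [h1, h2]
      exact ih (fun s hsn => hs s (by omega))

lemma key {m : ℕ} (A B C C' : Matrix (Fin m) (Fin m) (ZMod 2))
    (h : IsNet 0 m 3 (digitalNet m 3 ![A, B, C]))
    (h' : IsNet 0 m 3 (digitalNet m 3 ![A, B, C'])) (r : Fin m)
    (IHspan : Submodule.span (ZMod 2) (rowSet C' r.val) =
      Submodule.span (ZMod 2) (rowSet C r.val)) :
    C' r + C r ∈ Submodule.span (ZMod 2) (rowSet C r.val) := by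
  have hrm := r.isLt
  have stepA : ∀ i : ℕ, i + r.val + 1 ≤ m →
      C' r + C r ∈ Submodule.span (ZMod 2)
        (rowSet A i ∪ rowSet B (m - i - r.val - 1) ∪ rowSet C r.val) := by
    intro i hi
    set d2 := m - i - r.val - 1 with hd2
    have hd : i + d2 + (r.val + 1) = m := by omega
    obtain ⟨hli, hsp⟩ := stack3_indep A B C h i d2 (r.val + 1) hd
    obtain ⟨hli', hsp'⟩ := stack3_indep A B C' h' i d2 (r.val + 1) hd
    have hidx : i + d2 + r.val < m := by omega
    have hCr : C r = stack3 A B C i d2 ⟨i + d2 + r.val, hidx⟩ := by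
      simp only [stack3]
      rw [dif_neg (by simp <;> omega), dif_neg (by simp <;> omega)]
      exact congrArg C (by ext; simp <;> omega)
    have hCr' : C' r = stack3 A B C' i d2 ⟨i + d2 + r.val, hidx⟩ := by
      simp only [stack3]
      rw [dif_neg (by simp <;> omega), dif_neg (by simp <;> omega)]
      exact congrArg C' (by ext; simp <;> omega)
    have hset := rowSet_as_image A B C (d1 := i) (d2 := d2) (d3 := r.val + 1)
      (n1 := i) (n2 := d2) (n3 := r.val) hd le_rfl le_rfl (by omega)
    have hset' := rowSet_as_image A B C' (d1 := i) (d2 := d2) (d3 := r.val + 1)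
      (n1 := i) (n2 := d2) (n3 := r.val) hd le_rfl le_rfl (by omega)
    have h1 : C r ∉ Submodule.span (ZMod 2) (rowSet A i ∪ rowSet B d2 ∪ rowSet C r.val) := by
      rw [hset, hCr]
      exact hli.notMem_span_image (by simp <;> omega)
    have h1' : C' r ∉ Submodule.span (ZMod 2)
        (rowSet A i ∪ rowSet B d2 ∪ rowSet C' r.val) := by
      rw [hset', hCr']
      exact hli'.notMem_span_image (by simp <;> omega)
    have hHrw : Submodule.span (ZMod 2) (rowSet A i ∪ rowSet B d2 ∪ rowSet C' r.val)
        = Submodule.span (ZMod 2) (rowSet A i ∪ rowSet B d2 ∪ rowSet C r.val) := by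
      rw [Submodule.span_union, Submodule.span_union, IHspan,
        ← Submodule.span_union, ← Submodule.span_union]
    have h1'' : C' r ∉ Submodule.span (ZMod 2)
        (rowSet A i ∪ rowSet B d2 ∪ rowSet C r.val) := by
      rw [← hHrw]
      exact h1'
    have hrange : Set.range (stack3 A B C i d2) ⊆
        rowSet A i ∪ rowSet B d2 ∪ rowSet C (r.val + 1) := by
      rintro x ⟨idx, rfl⟩
      simp only [stack3]
      split_ifs with hx1 hx2
      · exact Or.inl (Or.inl ⟨⟨idx.val, idx.isLt⟩, hx1, rfl⟩)
      · exact Or.inl (Or.inr ⟨⟨idx.val - i, by omega⟩, by simp <;> omega, rfl⟩)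
      · exact Or.inr ⟨⟨idx.val - i - d2, by omega⟩, by simp <;> omega, rfl⟩
    have hsup : Submodule.span (ZMod 2) (rowSet A i ∪ rowSet B d2 ∪ rowSet C (r.val + 1)) =
        Submodule.span (ZMod 2) (rowSet A i ∪ rowSet B d2 ∪ rowSet C r.val) ⊔
          Submodule.span (ZMod 2) {C r} := by
      rw [rowSet_succ C hrm]
      rw [show (C ⟨r.val, hrm⟩) = C r from congrArg C (by ext; simp)]
      rw [← Set.union_assoc, Submodule.span_union]
    have htop : C' r ∈ Submodule.span (ZMod 2)
        (rowSet A i ∪ rowSet B d2 ∪ rowSet C r.val) ⊔ Submodule.span (ZMod 2) {C r} := by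
      have hc : C' r ∈ Submodule.span (ZMod 2) (Set.range (stack3 A B C i d2)) := by
        rw [hsp]
        exact Submodule.mem_top
      have hc2 := Submodule.span_mono hrange hc
      rw [hsup] at hc2
      exact hc2
    obtain ⟨y, hy, z, hz, hxyz⟩ := Submodule.mem_sup.mp htop
    obtain ⟨t, rfl⟩ := Submodule.mem_span_singleton.mp hz
    rcases (by decide : ∀ a : ZMod 2, a = 0 ∨ a = 1) t with ht | ht
    · rw [ht, zero_smul, add_zero] at hxyz
      exact absurd (hxyz ▸ hy) h1''
    · rw [ht, one_smul] at hxyz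
      have hfin : C' r + C r = y := by
        rw [← hxyz, add_assoc, zmod2_add_self, add_zero]
      rw [hfin]
      exact hy
  have stepB : ∀ k : ℕ, k + r.val + 1 ≤ m →
      C' r + C r ∈ Submodule.span (ZMod 2)
        (rowSet B (m - k - r.val - 1) ∪ rowSet C r.val) := by
    intro k
    induction k with
    | zero =>
      intro hk
      have := stepA 0 hk
      rw [rowSet_zero, Set.empty_union] at this
      exact this
    | succ k ih =>
      intro hk
      have hk' : k + r.val + 1 ≤ m := by omega
      have hx1 := ih hk'
      have hx2 := stepA (k + 1) hk
      have hb : m - k - r.val - 2 < m := by omega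
      set b := B ⟨m - k - r.val - 2, hb⟩ with hbdef
      have hsplit : rowSet B (m - k - r.val - 1) = rowSet B (m - k - r.val - 2) ∪ {b} := by
        rw [show m - k - r.val - 1 = (m - k - r.val - 2) + 1 by omega]
        exact rowSet_succ B hb
      rw [hsplit, Set.union_right_comm, Submodule.span_union] at hx1
      obtain ⟨w, hw, z, hz, hwz⟩ := Submodule.mem_sup.mp hx1
      obtain ⟨t, rfl⟩ := Submodule.mem_span_singleton.mp hz
      rcases (by decide : ∀ a : ZMod 2, a = 0 ∨ a = 1) t with ht | ht
      · rw [ht, zero_smul, add_zero] at hwz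
        rw [show m - (k+1) - r.val - 1 = m - k - r.val - 2 by omega]
        exact hwz ▸ hw
      · rw [ht, one_smul] at hwz
        exfalso
        have hx2' : C' r + C r ∈ Submodule.span (ZMod 2)
            (rowSet A (k+1) ∪ rowSet B (m - k - r.val - 2) ∪ rowSet C r.val) := by
          rw [show m - k - r.val - 2 = m - (k+1) - r.val - 1 by omega]
          exact hx2
        have hw' : w ∈ Submodule.span (ZMod 2)
            (rowSet A (k+1) ∪ rowSet B (m - k - r.val - 2) ∪ rowSet C r.val) := by
          refine Submodule.span_mono ?_ hw
          exact Set.union_subset_union_left _ Set.subset_union_right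
        have hbval : b = (C' r + C r) + w := by
          rw [← hwz, add_comm w b, add_assoc, zmod2_add_self, add_zero]
        have hbmem : b ∈ Submodule.span (ZMod 2)
            (rowSet A (k+1) ∪ rowSet B (m - k - r.val - 2) ∪ rowSet C r.val) := by
          rw [hbval]
          exact add_mem hx2' hw'
        have hd : (k+1) + (m - k - r.val - 1) + r.val = m := by omega
        obtain ⟨hli, -⟩ := stack3_indep A B C h (k+1) (m - k - r.val - 1) r.val hd
        have hset := rowSet_as_image A B C (d1 := k+1) (d2 := m - k - r.val - 1)
          (d3 := r.val) (n1 := k+1) (n2 := m - k - r.val - 2) (n3 := r.val)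
          hd le_rfl (by omega) le_rfl
        have hidx2 : (k+1) + (m - k - r.val - 2) < m := by omega
        have hbst : b = stack3 A B C (k+1) (m - k - r.val - 1)
            ⟨(k+1) + (m - k - r.val - 2), hidx2⟩ := by
          simp only [hbdef, stack3]
          rw [dif_neg (by simp <;> omega), dif_pos (by simp <;> omega)]
          exact congrArg B (by ext; simp <;> omega)
        rw [hset, hbst] at hbmem
        exact hli.notMem_span_image (by simp <;> omega) hbmem
  have hfin := stepB (m - r.val - 1) (by omega)
  rw [show m - (m - r.val - 1) - r.val - 1 = 0 by omega, rowSet_zero, Set.empty_union] at hfin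
  exact hfin

theorem stmt16 (m : ℕ) (hm : 1 ≤ m) (A B C C' : Matrix (Fin m) (Fin m) (ZMod 2))
    (h : IsNet 0 m 3 (digitalNet m 3 ![A, B, C]))
    (h' : IsNet 0 m 3 (digitalNet m 3 ![A, B, C'])) :
    ∀ r : Fin m,
      C' r ∈ (fun v => C r + v) '' ↑(Submodule.span (ZMod 2) (rowSet C r.val)) := by
  have main : ∀ n : ℕ, ∀ r : Fin m, r.val ≤ n →
      C' r + C r ∈ Submodule.span (ZMod 2) (rowSet C r.val) := by
    intro n
    induction n with
    | zero =>
      intro r hr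
      apply key A B C C' h h' r
      have h0 : r.val = 0 := by omega
      rw [h0, rowSet_zero, rowSet_zero]
    | succ n ih =>
      intro r hr
      rcases Nat.lt_or_ge r.val (n + 1) with hlt | hge
      · exact ih r (by omega)
      · apply key A B C C' h h' r
        apply span_rowSet_eq
        intro s hs
        exact ih s (by omega)
  intro r
  refine ⟨C' r + C r, main r.val r le_rfl, ?_⟩
  show C r + (C' r + C r) = C' r
  rw [add_comm (C' r) (C r), ← add_assoc, zmod2_add_self, zero_add]
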